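/- arXiv:1310.1803 — 4 statements merged into one kernel-verified Lean document; each statement's English description precedes it below -/
import Mathlib

section
/- If Pi_1 and Pi_2 are permutation matrices of size N = 2^n satisfying Pi_2 H_N = H_N Pi_1, where H_N is the N x N Hadamard matrix with entries (H_N)_{i,j} = (-1)^{<i,j>} under the binary-index identification, then the corresponding permutations pi_1, pi_2 of F_2^n are F_2-linear, i.e., they are given by matrices in GL(n, F_2). -/
/-!
Reading the entry `(i, j)` of `Π₂ H = H Π₁` gives `⟨π₂ i, j⟩ = ⟨i, π₁⁻¹ j⟩`, since `(-1)^b`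
determines `b ∈ 𝔽₂`. So `π₂` and `π₁⁻¹` are adjoint to each other for the nondegenerate form
`⟨·, ·⟩`, and a map with an adjoint for a nondegenerate form is linear. A linear bijection of
`𝔽₂ⁿ` is given by an invertible matrix.
-/

/-- Inner product over `𝔽₂`. -/
def ip {ι : Type*} [Fintype ι] (u v : ι → ZMod 2) : ZMod 2 := ∑ t, u t * v t

/-- `(-1)^b` for `b ∈ 𝔽₂`. -/
def sgn (a : ZMod 2) : ℝ := (-1 : ℝ) ^ a.val

open Matrix

lemma ip_eq_dotProduct {ι : Type*} [Fintype ι] (u v : ι → ZMod 2) : ip u v = u ⬝ᵥ v := rfl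

lemma sgn_injective : Function.Injective sgn := by
  intro a b h
  fin_cases a <;> fin_cases b <;> first | rfl | norm_num [sgn, ZMod.val] at h

lemma Matrix.apply_eq_apply_symm_of_permMatrix_mul_eq {m α : Type*} [Fintype m] [DecidableEq m]
    [NonAssocSemiring α] {σ τ : Equiv.Perm m} {M : Matrix m m α}
    (h : σ.permMatrix α * M = M * τ.permMatrix α) (i j : m) :
    M (σ i) j = M i (τ.symm j) := by
  simpa [PEquiv.toMatrix_toPEquiv_mul, PEquiv.mul_toMatrix_toPEquiv] using congr_fun₂ h i j

lemma isLinearMap_of_dotProduct_adjoint {ι R : Type*} [Fintype ι] [CommSemiring R]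
    {f g : (ι → R) → ι → R} (h : ∀ u v, f u ⬝ᵥ v = u ⬝ᵥ g v) : IsLinearMap R f where
  map_add u u' := dotProduct_eq _ _ fun v => by simp only [add_dotProduct, h]
  map_smul c u := dotProduct_eq _ _ fun v => by simp only [smul_dotProduct, h]

lemma LinearEquiv.exists_isUnit_det_mulVec_eq {ι R : Type*} [Fintype ι] [DecidableEq ι]
    [CommRing R] (e : (ι → R) ≃ₗ[R] ι → R) :
    ∃ A : Matrix ι ι R, IsUnit A.det ∧ ∀ v, e v = A *ᵥ v :=
  ⟨LinearMap.toMatrix' e, LinearMap.det_toMatrix' (e : (ι → R) →ₗ[R] ι → R) ▸ e.isUnit_det',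
    fun v => (LinearMap.toMatrix'_mulVec _ v).symm⟩

/-- If two permutation matrices satisfy `Π₂ H = H Π₁` for the Hadamard matrix `H`,
then the corresponding permutations of `𝔽₂ⁿ` are linear, given by invertible matrices. -/
theorem stmt3 (n : ℕ) (π₁ π₂ : Equiv.Perm (Fin n → ZMod 2))
    (H : Matrix (Fin n → ZMod 2) (Fin n → ZMod 2) ℝ)
    (hH : ∀ i j, H i j = sgn (ip i j))
    (P : Equiv.Perm (Fin n → ZMod 2) → Matrix (Fin n → ZMod 2) (Fin n → ZMod 2) ℝ)
    (hP : ∀ π i j, P π i j = if π i = j then (1 : ℝ) else 0)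
    (hcomm : P π₂ * H = H * P π₁) :
    ∃ A B : Matrix (Fin n) (Fin n) (ZMod 2), IsUnit A.det ∧ IsUnit B.det ∧
      (∀ v, π₁ v = A.mulVec v) ∧ (∀ v, π₂ v = B.mulVec v) := by
  have P_eq : ∀ π, P π = π.permMatrix ℝ := fun π => Matrix.ext fun i j => by simp [hP]
  rw [P_eq, P_eq] at hcomm
  have adjoint : ∀ u v, π₂ u ⬝ᵥ v = u ⬝ᵥ π₁.symm v := fun u v => sgn_injective <| by
    simpa only [hH, ip_eq_dotProduct] using apply_eq_apply_symm_of_permMatrix_mul_eq hcomm u v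
  have lin₂ := isLinearMap_of_dotProduct_adjoint adjoint
  have lin₁ : IsLinearMap (ZMod 2) π₁.symm := isLinearMap_of_dotProduct_adjoint (g := π₂)
    fun u v => by rw [dotProduct_comm, ← adjoint, dotProduct_comm]
  obtain ⟨A, hA, hπ₁⟩ := (π₁.symm.toLinearEquiv lin₁).symm.exists_isUnit_det_mulVec_eq
  obtain ⟨B, hB, hπ₂⟩ := (π₂.toLinearEquiv lin₂).exists_isUnit_det_mulVec_eq
  exact ⟨A, B, hA, hB, hπ₁, hπ₂⟩
end

section
/- Downsampling with offset: with the notation of the downsampling property, for any p in F_2^n whose last b coordinates are zero, the B-dimensional WHT of m |-> x_{Psi_b m + p} at k in F_2^b equals sqrt(B/N) * sum over j in Null(Psi_b^T) of (-1)^{<p,j>} X_{Psi_b k + j}. -/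
open Matrix Finset

/-- The Walsh-Hadamard transform. -/
noncomputable def WHT {ι : Type*} [DecidableEq ι] [Fintype ι]
    (x : (ι → ZMod 2) → ℝ) (k : ι → ZMod 2) : ℝ :=
  (Real.sqrt (Fintype.card (ι → ZMod 2)))⁻¹ * ∑ m, sgn (ip k m) * x m

/-- `Ψ_b : 𝔽₂ᵇ → 𝔽₂ⁿ`, placing a `b`-bit vector in the last `b` coordinates. -/
def Psi (n b : ℕ) (hb : b ≤ n) (m : Fin b → ZMod 2) : Fin n → ZMod 2 :=
  fun i => if _ : (i : ℕ) < n - b then 0 else m ⟨(i : ℕ) - (n - b), by have := i.isLt; omega⟩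

/-- `Ψ_bᵀ : 𝔽₂ⁿ → 𝔽₂ᵇ`, extracting the last `b` coordinates. -/
def PsiT (n b : ℕ) (hb : b ≤ n) (j : Fin n → ZMod 2) : Fin b → ZMod 2 :=
  fun t => j ⟨n - b + (t : ℕ), by have := t.isLt; omega⟩

/-!
Expanding each `WHT x (Ψ k + j)` and exchanging sums turns the sum over the kernel of `Ψᵀ` into
the character sum `∑ⱼ (-1)^⟨j, p + y⟩`, which is `N / B` when `p + y` vanishes on the first
`n - b` coordinates and `0` otherwise. Those `y` form exactly the coset `Ψ m + p`, and there
`⟨Ψ k, y⟩ = ⟨k, Ψᵀ y⟩ = ⟨k, m⟩` since `Ψ` is adjoint to `Ψᵀ` and `Ψᵀ p = 0`. What is left is the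
normalisation `√(B/N) · N^(-1/2) · N/B = B^(-1/2)`.
-/

lemma sgn_add (a b : ZMod 2) : sgn (a + b) = sgn a * sgn b := by
  rw [sgn, sgn, sgn, ZMod.val_add, ← neg_one_pow_eq_pow_mod_two, pow_add]

lemma sgn_sum {ι : Type*} (s : Finset ι) (f : ι → ZMod 2) :
    sgn (∑ t ∈ s, f t) = ∏ t ∈ s, sgn (f t) := by
  classical
  induction s using Finset.induction_on with
  | empty => rfl
  | insert a s ha ih => rw [sum_insert ha, prod_insert ha, sgn_add, ih]

lemma sum_sgn_mul (w : ZMod 2) : ∑ a : ZMod 2, sgn (a * w) = if w = 0 then 2 else 0 := by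
  rw [show (univ : Finset (ZMod 2)) = {0, 1} from rfl, sum_pair zero_ne_one]
  obtain rfl | rfl : w = 0 ∨ w = 1 := by revert w; decide
  · norm_num [sgn]
  · norm_num [sgn, ZMod.val_one]

section InnerProduct

variable {ι : Type*} [Fintype ι]

lemma ip_comm (u v : ι → ZMod 2) : ip u v = ip v u := by
  simp only [ip, mul_comm]

lemma ip_add_left (u v w : ι → ZMod 2) : ip (u + v) w = ip u w + ip v w := by
  simp only [ip, Pi.add_apply, add_mul, sum_add_distrib]

lemma sgn_ip (u v : ι → ZMod 2) : sgn (ip u v) = ∏ i, sgn (u i * v i) := sgn_sum _ _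

lemma sum_sgn_ip_of_mem_iff_support_subset [DecidableEq ι] {K : Finset (ι → ZMod 2)}
    {s : Finset ι} (hK : ∀ j, j ∈ K ↔ ∀ i ∉ s, j i = 0) (w : ι → ZMod 2) :
    ∑ j ∈ K, sgn (ip j w) = if ∀ i ∈ s, w i = 0 then 2 ^ #s else 0 := by
  have hpi : K = Fintype.piFinset (fun i => if i ∈ s then univ else {0}) := by
    ext j
    rw [hK, Fintype.mem_piFinset]
    refine forall_congr' fun i => ?_
    split_ifs <;> simp [*]
  have hfactor (i : ι) : ∑ a ∈ (if i ∈ s then univ else {0}), sgn (a * w i) =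
      if i ∈ s then (if w i = 0 then 2 else 0) else 1 := by
    by_cases hs : i ∈ s
    · simp only [hs, if_true, sum_sgn_mul]
    · simp [hs, sgn]
  simp_rw [hpi, sgn_ip]
  rw [← prod_univ_sum _ (fun i a => sgn (a * w i))]
  simp_rw [hfactor, prod_ite_mem_eq, prod_ite_zero, prod_const]

lemma sum_sgn_ip_mul_WHT_add [DecidableEq ι] (x : (ι → ZMod 2) → ℝ) (K : Finset (ι → ZMod 2))
    (p a : ι → ZMod 2) :
    ∑ j ∈ K, sgn (ip p j) * WHT x (a + j) =
      (√(Fintype.card (ι → ZMod 2)))⁻¹ *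
        ∑ y, (∑ j ∈ K, sgn (ip j (p + y))) * (sgn (ip a y) * x y) := by
  simp_rw [WHT, mul_sum, sum_mul, mul_sum]
  rw [sum_comm]
  refine sum_congr rfl fun y _ => sum_congr rfl fun j _ => ?_
  rw [ip_comm j, ip_add_left, ip_add_left, sgn_add, sgn_add, ip_comm j y]
  ring

end InnerProduct

section Downsampling

variable {n b : ℕ} (hb : b ≤ n)

def headCoords (n b : ℕ) : Finset (Fin n) := {i | (i : ℕ) < n - b}

lemma card_headCoords : #(headCoords n b) = n - b := by
  rw [headCoords, Fin.card_filter_val_lt]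
  omega

lemma mem_headCoords {i : Fin n} : i ∈ headCoords n b ↔ (i : ℕ) < n - b := by
  simp [headCoords]

lemma Psi_apply_of_mem_headCoords (m : Fin b → ZMod 2) {i : Fin n} (hi : i ∈ headCoords n b) :
    Psi n b hb m i = 0 :=
  dif_pos (mem_headCoords.mp hi)

lemma Psi_apply_natAdd (m : Fin b → ZMod 2) (t : Fin b) :
    Psi n b hb m ⟨n - b + t, by omega⟩ = m t := by
  simp [Psi]

lemma PsiT_Psi (m : Fin b → ZMod 2) : PsiT n b hb (Psi n b hb m) = m :=
  funext (Psi_apply_natAdd hb m)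

lemma PsiT_add (u v : Fin n → ZMod 2) : PsiT n b hb (u + v) = PsiT n b hb u + PsiT n b hb v :=
  rfl

lemma Psi_PsiT_apply (j : Fin n → ZMod 2) (i : Fin n) :
    Psi n b hb (PsiT n b hb j) i = if i ∈ headCoords n b then 0 else j i := by
  simp only [Psi, PsiT, mem_headCoords]
  split_ifs
  · rfl
  · congr
    omega

lemma PsiT_eq_zero_iff (j : Fin n → ZMod 2) :
    PsiT n b hb j = 0 ↔ ∀ i ∉ headCoords n b, j i = 0 := by
  constructor
  · intro h i hi
    simpa [hi, h, Psi] using (Psi_PsiT_apply hb j i).symm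
  · intro h
    funext t
    exact h _ (by simp [mem_headCoords])

lemma ip_Psi_left (k : Fin b → ZMod 2) (y : Fin n → ZMod 2) :
    ip (Psi n b hb k) y = ip k (PsiT n b hb y) := by
  refine (Fintype.sum_of_injective (fun t : Fin b => (⟨n - b + t, by omega⟩ : Fin n))
    (fun s t h => by simpa [Fin.ext_iff] using h) _ _ (fun i hi => ?_)
    (fun t => by rw [Psi_apply_natAdd]; rfl)).symm
  have hhead : i ∈ headCoords n b := by
    by_contra h
    rw [mem_headCoords] at h
    exact hi ⟨⟨i - (n - b), by omega⟩, Fin.ext (by simp; omega)⟩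
  rw [Psi_apply_of_mem_headCoords hb k hhead, zero_mul]

lemma sum_ite_head_add_eq_zero_mul {p : Fin n → ZMod 2} (hp : PsiT n b hb p = 0) (c : ℝ)
    (f : (Fin n → ZMod 2) → ℝ) :
    ∑ y, (if ∀ i ∈ headCoords n b, (p + y) i = 0 then c else 0) * f y =
      c * ∑ m, f (Psi n b hb m + p) := by
  rw [mul_sum]
  refine (Fintype.sum_of_injective (fun m => Psi n b hb m + p) (fun m m' h => ?_) _ _
    (fun y hy => ?_) (fun m => ?_)).symm
  · simpa [PsiT_add, PsiT_Psi, hp] using congrArg (PsiT n b hb) h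
  · rw [if_neg, zero_mul]
    intro hhead
    refine hy ⟨PsiT n b hb y, funext fun i => ?_⟩
    change Psi n b hb (PsiT n b hb y) i + p i = y i
    rw [Psi_PsiT_apply]
    split_ifs with hi
    · rw [zero_add]
      exact CharTwo.add_eq_zero.mp (hhead i hi)
    · rw [(PsiT_eq_zero_iff hb p).mp hp i hi, add_zero]
  · rw [if_pos]
    intro i hi
    rw [Pi.add_apply, Pi.add_apply, Psi_apply_of_mem_headCoords hb m hi, zero_add,
      CharTwo.add_self_eq_zero]

end Downsampling

lemma sqrt_two_pow_div_mul_eq_inv_sqrt {n b : ℕ} (hb : b ≤ n) :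
    √((2 ^ b : ℝ) / 2 ^ n) * ((√(2 ^ n : ℝ))⁻¹ * 2 ^ (n - b)) = (√(2 ^ b : ℝ))⁻¹ := by
  obtain ⟨d, rfl⟩ : ∃ d, n = b + d := ⟨n - b, by omega⟩
  have h2d : (0 : ℝ) < 2 ^ d := by positivity
  have h2b : (0 : ℝ) < 2 ^ b := by positivity
  rw [Nat.add_sub_cancel_left, pow_add, Real.sqrt_div h2b.le, Real.sqrt_mul h2b.le]
  field_simp
  rw [Real.sq_sqrt h2d.le]

/-- Downsampling with offset. -/
theorem stmt6 (n b : ℕ) (hb : b < n) (x : (Fin n → ZMod 2) → ℝ)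
    (p : Fin n → ZMod 2) (hp : PsiT n b hb.le p = 0) (k : Fin b → ZMod 2) :
    WHT (fun m => x (Psi n b hb.le m + p)) k =
      Real.sqrt ((2 ^ b : ℝ) / (2 ^ n : ℝ)) *
        ∑ j ∈ Finset.univ.filter (fun j : Fin n → ZMod 2 => PsiT n b hb.le j = 0),
          sgn (ip p j) * WHT x (Psi n b hb.le k + j) := by
  have hkernel (j : Fin n → ZMod 2) :
      j ∈ univ.filter (fun j => PsiT n b hb.le j = 0) ↔ ∀ i ∉ headCoords n b, j i = 0 := by
    rw [mem_filter, PsiT_eq_zero_iff, and_iff_right (mem_univ j)]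
  rw [sum_sgn_ip_mul_WHT_add]
  simp_rw [sum_sgn_ip_of_mem_iff_support_subset hkernel, card_headCoords]
  rw [sum_ite_head_add_eq_zero_mul hb.le hp]
  simp_rw [ip_Psi_left, PsiT_add, PsiT_Psi, hp, add_zero]
  simp only [WHT, Fintype.card_fun, ZMod.card, Fintype.card_fin, Nat.cast_pow, Nat.cast_ofNat]
  rw [← mul_assoc, ← mul_assoc, mul_assoc _ _ (2 ^ (n - b) : ℝ), sqrt_two_pow_div_mul_eq_inv_sqrt hb.le]
end

section
/- Support estimation: suppose exactly one j' in the set {j : H j = k} satisfies X_{j'} != 0, where H = Psi_b^T Sigma^T with Sigma in GL(n,F_2) having columns sigma_1,...,sigma_n. Then for each d in [n-b], the ratio r_d = U_{Sigma, sigma_d}(k) / U_{Sigma,0}(k) equals (-1)^{<sigma_d, j'>}; and defining v_d = 1 if r_d < 0 and 0 otherwise (for d in [n-b], zero for d > n-b), the unique nonzero index is recovered as j' = Sigma^{-T}(Psi_b k + v). -/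
open Matrix Finset

lemma sgn_zero : sgn 0 = 1 := by simp [sgn]

lemma sgn_neg_iff (a : ZMod 2) : sgn a < 0 ↔ a = 1 := by
  rcases (by decide : ∀ x : ZMod 2, x = 0 ∨ x = 1) a with rfl | rfl <;> simp [sgn, ZMod.val_one]

lemma ZMod.two_ite_eq_one (a : ZMod 2) : (if a = 1 then 1 else 0 : ZMod 2) = a := by
  fin_cases a <;> rfl

lemma ip_zero_left {ι : Type*} [Fintype ι] (v : ι → ZMod 2) : ip 0 v = 0 := by
  simp [ip]

lemma ip_col_eq_transpose_mulVec {ι κ : Type*} [Fintype ι] (A : Matrix ι κ (ZMod 2))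
    (v : ι → ZMod 2) (d : κ) : ip (fun t => A t d) v = (Aᵀ *ᵥ v) d := by
  simp [ip, mulVec, dotProduct]

lemma Psi_PsiT_add_low (n b : ℕ) (hb : b ≤ n) (w : Fin n → ZMod 2) :
    Psi n b hb (PsiT n b hb w) + (fun i : Fin n => if (i : ℕ) < n - b then w i else 0) = w := by
  funext i
  by_cases hi : (i : ℕ) < n - b
  · simp [Psi, hi]
  · simp only [Pi.add_apply, Psi, PsiT, dif_neg hi, if_neg hi, add_zero]
    congr 1
    ext
    simp only
    omega

open scoped Classical in
/-- Support estimation when a single nonzero coefficient is hashed to bin `k`. -/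
theorem stmt9 (n b : ℕ) (hb : b < n)
    (A : Matrix (Fin n) (Fin n) (ZMod 2)) (hA : IsUnit A.det)
    (X : (Fin n → ZMod 2) → ℝ) (k : Fin b → ZMod 2) (j' : Fin n → ZMod 2)
    (hj' : PsiT n b hb.le (Aᵀ.mulVec j') = k) (hX : X j' ≠ 0)
    (huniq : ∀ j, PsiT n b hb.le (Aᵀ.mulVec j) = k → j ≠ j' → X j = 0) :
    let U : (Fin n → ZMod 2) → ℝ := fun p =>
      ∑ j ∈ Finset.univ.filter
          (fun j : Fin n → ZMod 2 => PsiT n b hb.le (Aᵀ.mulVec j) = k),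
        X j * sgn (ip p j)
    let col : Fin n → (Fin n → ZMod 2) := fun d t => A t d
    (∀ d : Fin n, (d : ℕ) < n - b → U (col d) / U 0 = sgn (ip (col d) j')) ∧
    j' = (A⁻¹)ᵀ.mulVec (Psi n b hb.le k +
      (fun i : Fin n => if (i : ℕ) < n - b ∧ U (col i) / U 0 < 0 then 1 else 0)) := by
  intro U col
  have hU : ∀ p, U p = X j' * sgn (ip p j') := fun p =>
    sum_eq_single j' (fun j hj hne => by rw [huniq j (mem_filter.mp hj).2 hne, zero_mul])
      (fun h => absurd (mem_filter.mpr ⟨mem_univ j', hj'⟩) h)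
  have hratio : ∀ p, U p / U 0 = sgn (ip p j') := fun p => by
    rw [hU, hU, ip_zero_left, sgn_zero, mul_one, mul_div_cancel_left₀ _ hX]
  refine ⟨fun d _ => hratio (col d), ?_⟩
  have hv : (fun i : Fin n => if (i : ℕ) < n - b ∧ U (col i) / U 0 < 0 then 1 else 0) =
      fun i : Fin n => if (i : ℕ) < n - b then (Aᵀ *ᵥ j') i else 0 := by
    funext i
    simp only [hratio, sgn_neg_iff, ite_and, ZMod.two_ite_eq_one, col, ip_col_eq_transpose_mulVec]
  have hAT : (Aᵀ)⁻¹ * Aᵀ = 1 := nonsing_inv_mul _ (by rwa [det_transpose])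
  rw [hv, ← hj', Psi_PsiT_add_low, mulVec_mulVec, transpose_nonsing_inv, hAT, one_mulVec]
end

section
/- Minimum trapping set size: a trapping set T in the C-dimensional lattice model is a nonempty finite set of C-tuples (r_0,...,r_{C-1}) such that for every element v of T and every coordinate i, there exists another element v_i of T, distinct from v, that agrees with v on all coordinates except the i-th and differs from v in the i-th coordinate. Then every trapping set has at least 2^C elements, and this bound is attained by the vertex set of a combinatorial C-dimensional cube. -/
theorem trap_lower : ∀ (C : ℕ) (R : Fin C → Type*) [∀ i, DecidableEq (R i)]
    (T : Finset (∀ i, R i)), T.Nonempty →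
    (∀ v ∈ T, ∀ i : Fin C, ∃ v' ∈ T, v' ≠ v ∧ ∀ j, j ≠ i → v' j = v j) →
    2 ^ C ≤ T.card := by
  intro C
  induction C with
  | zero =>
    intro R _ T hne _
    simpa using Finset.card_pos.mpr hne
  | succ n ih =>
    intro R _ T hne htrap
    classical
    let f : (∀ i, R i) → (∀ i : Fin n, R i.succ) := fun v i => v i.succ
    let S := T.image f
    have hfib : ∀ b ∈ S, 2 ≤ (T.filter fun a => f a = b).card := by
      intro b hb
      obtain ⟨v, hv, hvb⟩ := Finset.mem_image.mp hb
      obtain ⟨v', hv', hne', hagree⟩ := htrap v hv 0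
      have hfv' : f v' = b := by
        funext i
        show v' i.succ = b i
        rw [hagree i.succ (Fin.succ_ne_zero i)]
        exact congrFun hvb i
      have hsub : ({v', v} : Finset _) ⊆ T.filter fun a => f a = b := by
        intro x hx
        rcases Finset.mem_insert.mp hx with h | h
        · subst h; exact Finset.mem_filter.mpr ⟨hv', hfv'⟩
        · rw [Finset.mem_singleton.mp h]; exact Finset.mem_filter.mpr ⟨hv, hvb⟩
      calc 2 = ({v', v} : Finset _).card := (Finset.card_pair hne').symm
        _ ≤ _ := Finset.card_le_card hsub
    have hTS : 2 * S.card ≤ T.card := by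
      rw [Finset.card_eq_sum_card_image f T]
      calc 2 * S.card = ∑ _b ∈ S, 2 := by rw [Finset.sum_const, smul_eq_mul, mul_comm]
        _ ≤ ∑ b ∈ S, (T.filter fun a => f a = b).card := Finset.sum_le_sum hfib
    have hSne : S.Nonempty := hne.image f
    have hStrap : ∀ b ∈ S, ∀ i : Fin n, ∃ b' ∈ S, b' ≠ b ∧ ∀ j, j ≠ i → b' j = b j := by
      intro b hb i
      obtain ⟨v, hv, hvb⟩ := Finset.mem_image.mp hb
      obtain ⟨v', hv', hne', hagree⟩ := htrap v hv i.succ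
      refine ⟨f v', Finset.mem_image_of_mem f hv', ?_, ?_⟩
      · intro heq
        apply hne'
        funext j
        by_cases hj : j = i.succ
        · subst hj
          have := congrFun (heq.trans hvb.symm) i
          exact this
        · exact hagree j hj
      · intro j hj
        show v' j.succ = b j
        rw [hagree j.succ (by simpa [Fin.succ_inj] using hj)]
        exact congrFun hvb j
    have hS : 2 ^ n ≤ S.card := ih (fun i => R i.succ) S hSne hStrap
    calc 2 ^ (n + 1) = 2 * 2 ^ n := by ring
      _ ≤ 2 * S.card := by omega
      _ ≤ T.card := hTS

/-- Minimum trapping set size: a nonempty trapping set in the `C`-dimensional lattice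
model has at least `2^C` elements, and the bound is attained by the vertex set of a
combinatorial `C`-dimensional cube. -/
theorem stmt18 (C : ℕ) (R : Fin C → Type*) [∀ i, DecidableEq (R i)] :
    (∀ T : Finset (∀ i, R i), T.Nonempty →
      (∀ v ∈ T, ∀ i : Fin C, ∃ v' ∈ T, v' ≠ v ∧ ∀ j, j ≠ i → v' j = v j) →
      2 ^ C ≤ T.card) ∧
    (∀ r r' : ∀ i, R i, (∀ i, r i ≠ r' i) →
      ∃ T : Finset (∀ i, R i), T.card = 2 ^ C ∧
        (∀ a, a ∈ T ↔ ∀ i, a i = r i ∨ a i = r' i) ∧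
        ∀ v ∈ T, ∀ i : Fin C, ∃ v' ∈ T, v' ≠ v ∧ ∀ j, j ≠ i → v' j = v j) := by
  classical
  constructor
  · exact trap_lower C R
  · intro r r' hrr'
    refine ⟨Fintype.piFinset (fun i => {r i, r' i}), ?_, ?_, ?_⟩
    · rw [Fintype.card_piFinset]
      have : ∀ i, ({r i, r' i} : Finset (R i)).card = 2 := fun i => Finset.card_pair (hrr' i)
      simp [this]
    · intro a
      simp [Fintype.mem_piFinset]
    · intro v hv i
      have hmem : ∀ j, v j = r j ∨ v j = r' j := by
        have := Fintype.mem_piFinset.mp hv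
        intro j; simpa using this j
      refine ⟨Function.update v i (if v i = r i then r' i else r i), ?_, ?_, ?_⟩
      · rw [Fintype.mem_piFinset]
        intro j
        by_cases hj : j = i
        · subst hj
          simp only [Function.update_self]
          split <;> simp
        · rw [Function.update_of_ne hj]
          simpa using hmem j
      · intro heq
        have := congrFun heq i
        rw [Function.update_self] at this
        by_cases h : v i = r i
        · rw [if_pos h] at this; exact hrr' i (h.symm.trans this.symm)
        · rw [if_neg h] at this; exact h this.symm
      · intro j hj
        exact Function.update_of_ne hj _ v
end
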